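/- Let n ≥ 3 and let Σ = {±e_k ± e_l : 1 ≤ k < l ≤ n} ∪ {±e_k : 1 ≤ k ≤ n} ⊂ ℝ^n be the root system of type B_n with simple roots α_k = e_k − e_{k+1} (1 ≤ k ≤ n−1) and α_n = e_n. Let 1 ≤ i < j ≤ n−1, let S = {α_k : 1 ≤ k ≤ n, k ≠ i, k ≠ j}, and let p be the orthogonal projection of ℝ^n onto the orthogonal complement of the span of S. Write ᾱ_i = p(α_i) and ᾱ_j = p(α_j). Then ᾱ_i and ᾱ_j are linearly independent and the set of reduced restricted roots Σ_red(S) equals {±ᾱ_i, ±ᾱ_j, ±(ᾱ_i + ᾱ_j), ±(ᾱ_i + 2ᾱ_j)}. -/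

import Mathlib

/-!
The span of the simple roots other than `α_i, α_j` consists of the vectors whose coordinates
sum to zero over the block `k ≤ i` and over the block `i < k ≤ j`; the block `k > j` is
unconstrained because `α_n = e_n` is kept. Hence `p(e_k)` is the mean `u` of the basis vectors of
the first block for `k ≤ i`, the mean `w` of those of the second block for `i < k ≤ j`, and `0`
for `k > j`. So `ᾱ_i = u - w`, `ᾱ_j = w`, and `u, w` are linearly independent. Every restricted
root is `c u + d w` with integers `|c| + |d| ≤ 2`, and all of `±u, ±w, ±u ± w` occur. Those
with an odd coefficient are exactly `±u, ±w, ±u ± w`, and their halves are not restricted roots,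
while the others, `±2u` and `±2w`, have the restricted roots `±u, ±w` as halves.
-/

noncomputable section

/-- The `k`-th standard basis vector of `ℝ^N`. -/
def e {N : ℕ} (k : Fin N) : EuclideanSpace ℝ (Fin N) := EuclideanSpace.single k 1

/-- Orthogonal projection of `ℝ^N` onto the orthogonal complement of the span of `S`. -/
def projC {N : ℕ} (S : Set (EuclideanSpace ℝ (Fin N))) (v : EuclideanSpace ℝ (Fin N)) :
    EuclideanSpace ℝ (Fin N) :=
  (Submodule.orthogonalProjectionOnto ((Submodule.span ℝ S)ᗮ) v : EuclideanSpace ℝ (Fin N))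

/-- The set of restricted roots `Σ(S) = p(Σ) \ {0}`. -/
def restrictedRoots {N : ℕ} (Rts S : Set (EuclideanSpace ℝ (Fin N))) :
    Set (EuclideanSpace ℝ (Fin N)) :=
  (projC S '' Rts) \ {0}

/-- The set of reduced restricted roots: those `x ∈ Σ(S)` with `x/2 ∉ Σ(S)`. -/
def reducedRestrictedRoots {N : ℕ} (Rts S : Set (EuclideanSpace ℝ (Fin N))) :
    Set (EuclideanSpace ℝ (Fin N)) :=
  {x ∈ restrictedRoots Rts S | ¬ (1 / 2 : ℝ) • x ∈ restrictedRoots Rts S}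

/-- The root system of type `B_n` in `ℝ^n`: `±e_k ± e_l` (`k < l`) and `±e_k`. -/
def Broots (n : ℕ) : Set (EuclideanSpace ℝ (Fin n)) :=
  {v | ∃ k l : Fin n, k < l ∧
    (v = e k - e l ∨ v = e k + e l ∨ v = -e k + e l ∨ v = -e k - e l)} ∪
  {v | ∃ k : Fin n, v = e k ∨ v = -e k}

/-- The simple roots of `B_n`: `α_k = e_k − e_{k+1}` (`1 ≤ k ≤ n−1`) and `α_n = e_n`
(indexed here by `Fin n`). -/
def Bsimple (n : ℕ) (k : Fin n) : EuclideanSpace ℝ (Fin n) :=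
  if h : (k : ℕ) + 1 < n then e k - e ⟨(k : ℕ) + 1, h⟩ else e k

open Finset

section Projection

lemma mem_orthogonal_span_of_inner_eq_zero {𝕜 E : Type*} [RCLike 𝕜] [NormedAddCommGroup E]
    [InnerProductSpace 𝕜 E] {S : Set E} {v : E} (h : ∀ u ∈ S, inner 𝕜 u v = 0) :
    v ∈ (Submodule.span 𝕜 S)ᗮ := by
  have : Submodule.span 𝕜 S ⟂ Submodule.span 𝕜 {v} :=
    Submodule.isOrtho_span.2 fun u hu v' hv' => by rw [Set.mem_singleton_iff.1 hv']; exact h u hu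
  exact Submodule.isOrtho_iff_le.1 this.symm (Submodule.mem_span_singleton_self v)

variable {N : ℕ} (S : Set (EuclideanSpace ℝ (Fin N)))

@[simp] lemma projC_add (x y : EuclideanSpace ℝ (Fin N)) :
    projC S (x + y) = projC S x + projC S y := by simp [projC]

@[simp] lemma projC_neg (x : EuclideanSpace ℝ (Fin N)) : projC S (-x) = -projC S x := by
  simp [projC]

@[simp] lemma projC_sub (x y : EuclideanSpace ℝ (Fin N)) :
    projC S (x - y) = projC S x - projC S y := by simp [projC]

variable {S}

lemma projC_eq_of_mem_orthogonal {v q : EuclideanSpace ℝ (Fin N)}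
    (hq : q ∈ (Submodule.span ℝ S)ᗮ) (hvq : v - q ∈ Submodule.span ℝ S) : projC S v = q :=
  Submodule.eq_starProjection_of_mem_orthogonal hq (by rwa [Submodule.orthogonal_orthogonal])

end Projection

section BlockMean

variable {N : ℕ}

lemma inner_e_left (k : Fin N) (v : EuclideanSpace ℝ (Fin N)) : inner ℝ (e k) v = v k := by
  simp [e, EuclideanSpace.inner_single_left]

def blockMean (s : Finset (Fin N)) : EuclideanSpace ℝ (Fin N) := (#s : ℝ)⁻¹ • ∑ m ∈ s, e m

lemma blockMean_apply (s : Finset (Fin N)) (k : Fin N) :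
    blockMean s k = if k ∈ s then (#s : ℝ)⁻¹ else 0 := by
  simp [blockMean, e, WithLp.ofLp_sum, Finset.sum_apply]

lemma e_sub_blockMean {s : Finset (Fin N)} {k : Fin N} (hk : k ∈ s) :
    e k - blockMean s = (#s : ℝ)⁻¹ • ∑ m ∈ s, (e k - e m) := by
  have hs : (#s : ℝ) ≠ 0 := by exact_mod_cast (card_pos.2 ⟨k, hk⟩).ne'
  rw [sum_sub_distrib, sum_const, smul_sub, blockMean, ← Nat.cast_smul_eq_nsmul ℝ, smul_smul,
    inv_mul_cancel₀ hs, one_smul]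

lemma projC_e_eq_blockMean {S : Set (EuclideanSpace ℝ (Fin N))} {s : Finset (Fin N)}
    {k : Fin N} (hk : k ∈ s) (horth : blockMean s ∈ (Submodule.span ℝ S)ᗮ)
    (hconn : ∀ m ∈ s, e k - e m ∈ Submodule.span ℝ S) : projC S (e k) = blockMean s := by
  refine projC_eq_of_mem_orthogonal horth ?_
  rw [e_sub_blockMean hk]
  exact Submodule.smul_mem _ _ (Submodule.sum_mem _ hconn)

lemma linearIndependent_blockMean_pair {s t : Finset (Fin N)} (hst : Disjoint s t)
    (hs : s.Nonempty) (ht : t.Nonempty) :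
    LinearIndependent ℝ ![blockMean s, blockMean t] := by
  obtain ⟨k, hk⟩ := hs
  obtain ⟨l, hl⟩ := ht
  have hks : (#s : ℝ)⁻¹ ≠ 0 := by simpa using (card_pos.2 ⟨k, hk⟩).ne'
  have hlt : (#t : ℝ)⁻¹ ≠ 0 := by simpa using (card_pos.2 ⟨l, hl⟩).ne'
  refine LinearIndependent.pair_iff.2 fun a b hab => ⟨?_, ?_⟩
  · have := congrArg (fun v : EuclideanSpace ℝ (Fin N) => v k) hab
    simpa [blockMean_apply, hk, disjoint_left.1 hst hk, hks] using this
  · have := congrArg (fun v : EuclideanSpace ℝ (Fin N) => v l) hab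
    simpa [blockMean_apply, hl, disjoint_right.1 hst hl, hlt] using this

end BlockMean

section SimpleRoots

variable {n : ℕ}

lemma Bsimple_of_succ_lt {k : Fin n} (h : (k : ℕ) + 1 < n) :
    Bsimple n k = e k - e ⟨k + 1, h⟩ := dif_pos h

lemma Bsimple_of_not_succ_lt {k : Fin n} (h : ¬(k : ℕ) + 1 < n) : Bsimple n k = e k :=
  dif_neg h

lemma e_sub_e_mem_of_Bsimple_mem (V : Submodule ℝ (EuclideanSpace ℝ (Fin n))) {a b : Fin n}
    (hab : a ≤ b) (h : ∀ m, a ≤ m → m < b → Bsimple n m ∈ V) : e a - e b ∈ V := by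
  obtain ⟨b, hb⟩ := b
  induction b, (show (a : ℕ) ≤ b from hab) using Nat.le_induction with
  | base => simp
  | succ b hab' ih =>
    have hb' : b < n := by omega
    have hstep := h ⟨b, hb'⟩ (by simpa [Fin.le_def] using hab') (by simp [Fin.lt_def])
    rw [Bsimple_of_succ_lt hb] at hstep
    have := V.add_mem (ih hb' (by simpa [Fin.le_def] using hab')
      fun m ham hmb => h m ham (lt_trans hmb (by simp [Fin.lt_def]))) hstep
    rwa [sub_add_sub_cancel] at this

lemma e_sub_e_mem_of_Bsimple_mem' (V : Submodule ℝ (EuclideanSpace ℝ (Fin n))) {a b : Fin n}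
    (h : ∀ m, min a b ≤ m → m < max a b → Bsimple n m ∈ V) : e a - e b ∈ V := by
  rcases le_total a b with hab | hba
  · exact e_sub_e_mem_of_Bsimple_mem V hab (by simpa [hab] using h)
  · rw [← neg_sub]
    exact V.neg_mem (e_sub_e_mem_of_Bsimple_mem V hba (by simpa [hba] using h))

lemma e_mem_of_Bsimple_mem (V : Submodule ℝ (EuclideanSpace ℝ (Fin n))) {a : Fin n}
    (h : ∀ m, a ≤ m → Bsimple n m ∈ V) : e a ∈ V := by
  have ha := a.isLt
  have hal : a ≤ ⟨n - 1, by omega⟩ := Fin.le_def.2 (show (a : ℕ) ≤ n - 1 by omega)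
  have hlast := h _ hal
  rw [Bsimple_of_not_succ_lt (show ¬n - 1 + 1 < n by omega)] at hlast
  simpa using V.add_mem (e_sub_e_mem_of_Bsimple_mem V hal fun m ham _ => h m ham) hlast

lemma inner_Bsimple_blockMean {s : Finset (Fin n)} {m : Fin n}
    (hsucc : ∀ h : (m : ℕ) + 1 < n, (m ∈ s ↔ (⟨m + 1, h⟩ : Fin n) ∈ s))
    (hlast : ¬(m : ℕ) + 1 < n → m ∉ s) : inner ℝ (Bsimple n m) (blockMean s) = 0 := by
  by_cases h : (m : ℕ) + 1 < n
  · simp [Bsimple_of_succ_lt h, inner_sub_left, inner_e_left, blockMean_apply, hsucc h]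
  · simp [Bsimple_of_not_succ_lt h, inner_e_left, blockMean_apply, hlast h]

lemma neg_mem_Broots {β : EuclideanSpace ℝ (Fin n)} (hβ : β ∈ Broots n) : -β ∈ Broots n := by
  rcases hβ with ⟨k, l, hkl, rfl | rfl | rfl | rfl⟩ | ⟨k, rfl | rfl⟩
  · exact Or.inl ⟨k, l, hkl, Or.inr (Or.inr (Or.inl (by abel)))⟩
  · exact Or.inl ⟨k, l, hkl, Or.inr (Or.inr (Or.inr (by abel)))⟩
  · exact Or.inl ⟨k, l, hkl, Or.inl (by abel)⟩
  · exact Or.inl ⟨k, l, hkl, Or.inr (Or.inl (by abel))⟩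
  · exact Or.inr ⟨k, Or.inr rfl⟩
  · exact Or.inr ⟨k, Or.inl (neg_neg _)⟩

end SimpleRoots

section IntL1Ball

variable {E : Type*} [AddCommGroup E] [Module ℝ E]

def intL1Ball (u w : E) (r : ℤ) : Set E :=
  {x | ∃ c d : ℤ, |c| + |d| ≤ r ∧ x = (c : ℝ) • u + (d : ℝ) • w}

variable {u w x y : E} {r s : ℤ}

lemma zero_mem_intL1Ball (hr : 0 ≤ r) : (0 : E) ∈ intL1Ball u w r := ⟨0, 0, by simpa, by simp⟩

lemma left_mem_intL1Ball : u ∈ intL1Ball u w 1 := ⟨1, 0, by simp, by simp⟩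

lemma right_mem_intL1Ball : w ∈ intL1Ball u w 1 := ⟨0, 1, by simp, by simp⟩

lemma intL1Ball_mono (hrs : r ≤ s) : intL1Ball u w r ⊆ intL1Ball u w s :=
  fun _ ⟨c, d, hcd, hx⟩ => ⟨c, d, hcd.trans hrs, hx⟩

lemma neg_mem_intL1Ball (hx : x ∈ intL1Ball u w r) : -x ∈ intL1Ball u w r := by
  obtain ⟨c, d, hcd, rfl⟩ := hx
  exact ⟨-c, -d, by simpa using hcd, by push_cast; module⟩

lemma add_mem_intL1Ball (hx : x ∈ intL1Ball u w r) (hy : y ∈ intL1Ball u w s) :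
    x + y ∈ intL1Ball u w (r + s) := by
  obtain ⟨c, d, hcd, rfl⟩ := hx
  obtain ⟨c', d', hcd', rfl⟩ := hy
  refine ⟨c + c', d + d', ?_, by push_cast; module⟩
  linarith [abs_add_le c c', abs_add_le d d']

lemma half_smul_notMem_intL1Ball (huw : LinearIndependent ℝ ![u, w]) {c d : ℤ}
    (hcd : Odd c ∨ Odd d) : (1 / 2 : ℝ) • ((c : ℝ) • u + (d : ℝ) • w) ∉ intL1Ball u w r := by
  rintro ⟨c', d', -, h⟩
  obtain ⟨hc, hd⟩ := LinearIndependent.pair_iff.1 huw (c / 2 - c') (d / 2 - d')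
    (by linear_combination (norm := module) h)
  have hc : c = 2 * c' := by exact_mod_cast (by linarith : (c : ℝ) = 2 * c')
  have hd : d = 2 * d' := by exact_mod_cast (by linarith : (d : ℝ) = 2 * d')
  rcases hcd with hcd | hcd
  · exact Int.not_even_iff_odd.2 hcd ⟨c', by omega⟩
  · exact Int.not_even_iff_odd.2 hcd ⟨d', by omega⟩

theorem reduced_eq_of_subset_intL1Ball (huw : LinearIndependent ℝ ![u, w]) {P : Set E}
    (hP : P ⊆ intL1Ball u w 2)
    (hB₂ : {u - w, -(u - w), w, -w, u, -u, u + w, -(u + w)} ⊆ P) :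
    {x ∈ P \ {0} | (1 / 2 : ℝ) • x ∉ P \ {0}} =
      {u - w, -(u - w), w, -w, u, -u, u + w, -(u + w)} := by
  have hu : u ≠ 0 := by simpa using huw.ne_zero 0
  have hw : w ≠ 0 := by simpa using huw.ne_zero 1
  ext x
  constructor
  · rintro ⟨⟨hxP, hx0⟩, hhalf⟩
    obtain ⟨c, d, hcd, rfl⟩ := hP hxP
    obtain ⟨hc₁, hc₂⟩ := abs_le.1 (by linarith [abs_nonneg d] : |c| ≤ 2)
    obtain ⟨hd₁, hd₂⟩ := abs_le.1 (by linarith [abs_nonneg c] : |d| ≤ 2)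
    interval_cases c <;> interval_cases d <;> try (norm_num at hcd; done)
    -- one branch each: `(0, 0)`; `(±2, 0), (0, ±2)`, halving to `±u, ±w`; the claimed eight
    all_goals first
      | (simp at hx0; done)
      | (refine absurd ⟨hB₂ ?_, ?_⟩ hhalf <;> norm_num [smul_smul, hu, hw]; done)
      | simp only [Set.mem_insert_iff, Set.mem_singleton_iff]; push_cast
        repeat first | (left; module) | right | module
  · intro hx
    obtain ⟨c, d, hodd, rfl⟩ :
        ∃ c d : ℤ, (Odd c ∨ Odd d) ∧ x = (c : ℝ) • u + (d : ℝ) • w := by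
      rcases hx with rfl | rfl | rfl | rfl | rfl | rfl | rfl | rfl
      exacts [⟨1, -1, by decide, by push_cast; module⟩, ⟨-1, 1, by decide, by push_cast; module⟩,
        ⟨0, 1, by decide, by push_cast; module⟩, ⟨0, -1, by decide, by push_cast; module⟩,
        ⟨1, 0, by decide, by push_cast; module⟩, ⟨-1, 0, by decide, by push_cast; module⟩,
        ⟨1, 1, by decide, by push_cast; module⟩, ⟨-1, -1, by decide, by push_cast; module⟩]
    have hhalf := half_smul_notMem_intL1Ball (r := 2) huw hodd
    refine ⟨⟨hB₂ hx, fun h0 => hhalf ?_⟩, fun h => hhalf (hP h.1)⟩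
    rw [Set.mem_singleton_iff.1 h0, smul_zero]
    exact zero_mem_intL1Ball zero_le_two

end IntL1Ball

def simpleRootsExcept (n : ℕ) (i j : Fin n) : Set (EuclideanSpace ℝ (Fin n)) :=
  {v | ∃ k : Fin n, k ≠ i ∧ k ≠ j ∧ v = Bsimple n k}

section Levi

variable {n : ℕ} {i j : Fin n}

lemma Bsimple_mem_span_simpleRootsExcept {k : Fin n} (hki : k ≠ i) (hkj : k ≠ j) :
    Bsimple n k ∈ Submodule.span ℝ (simpleRootsExcept n i j) :=
  Submodule.subset_span ⟨k, hki, hkj, rfl⟩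

lemma blockMean_Iic_mem_orthogonal (hij : i < j) :
    blockMean (Iic i) ∈ (Submodule.span ℝ (simpleRootsExcept n i j))ᗮ := by
  refine mem_orthogonal_span_of_inner_eq_zero ?_
  rintro _ ⟨m, hmi, -, rfl⟩
  have hmi : (m : ℕ) ≠ i := Fin.val_ne_iff.2 hmi
  refine inner_Bsimple_blockMean (fun h => ?_) (fun h => ?_) <;>
    simp only [mem_Iic, Fin.le_def] <;> omega

lemma blockMean_Ioc_mem_orthogonal (hj : (j : ℕ) + 1 < n) :
    blockMean (Ioc i j) ∈ (Submodule.span ℝ (simpleRootsExcept n i j))ᗮ := by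
  refine mem_orthogonal_span_of_inner_eq_zero ?_
  rintro _ ⟨m, hmi, hmj, rfl⟩
  have hmi : (m : ℕ) ≠ i := Fin.val_ne_iff.2 hmi
  have hmj : (m : ℕ) ≠ j := Fin.val_ne_iff.2 hmj
  refine inner_Bsimple_blockMean (fun h => ?_) (fun h => ?_) <;>
    simp only [mem_Ioc, Fin.le_def, Fin.lt_def] <;> omega

lemma projC_e_of_le (hij : i < j) {k : Fin n} (hk : k ≤ i) :
    projC (simpleRootsExcept n i j) (e k) = blockMean (Iic i) := by
  refine projC_e_eq_blockMean (mem_Iic.2 hk) (blockMean_Iic_mem_orthogonal hij) fun m hm => ?_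
  refine e_sub_e_mem_of_Bsimple_mem' _ fun l _ hl => ?_
  have hli : l < i := hl.trans_le (max_le hk (mem_Iic.1 hm))
  exact Bsimple_mem_span_simpleRootsExcept hli.ne (hli.trans hij).ne

lemma projC_e_of_mem_Ioc (hj : (j : ℕ) + 1 < n) {k : Fin n} (hk : k ∈ Ioc i j) :
    projC (simpleRootsExcept n i j) (e k) = blockMean (Ioc i j) := by
  refine projC_e_eq_blockMean hk (blockMean_Ioc_mem_orthogonal hj) fun m hm => ?_
  refine e_sub_e_mem_of_Bsimple_mem' _ fun l hl₁ hl₂ => ?_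
  rw [mem_Ioc] at hk hm
  exact Bsimple_mem_span_simpleRootsExcept (lt_min hk.1 hm.1 |>.trans_le hl₁).ne'
    (hl₂.trans_le (max_le hk.2 hm.2)).ne

lemma projC_e_of_lt (hij : i < j) {k : Fin n} (hk : j < k) :
    projC (simpleRootsExcept n i j) (e k) = 0 := by
  refine projC_eq_of_mem_orthogonal (Submodule.zero_mem _) ?_
  rw [sub_zero]
  exact e_mem_of_Bsimple_mem _ fun m hm =>
    Bsimple_mem_span_simpleRootsExcept (hij.trans (hk.trans_le hm)).ne' (hk.trans_le hm).ne'

lemma projC_Bsimple_left (hij : i < j) (hj : (j : ℕ) + 1 < n) :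
    projC (simpleRootsExcept n i j) (Bsimple n i) =
      blockMean (Iic i) - blockMean (Ioc i j) := by
  have hi : (i : ℕ) + 1 < n := by omega
  rw [Bsimple_of_succ_lt hi, projC_sub, projC_e_of_le hij le_rfl,
    projC_e_of_mem_Ioc hj (by simp only [mem_Ioc, Fin.le_def, Fin.lt_def]; omega)]

lemma projC_Bsimple_right (hij : i < j) (hj : (j : ℕ) + 1 < n) :
    projC (simpleRootsExcept n i j) (Bsimple n j) = blockMean (Ioc i j) := by
  rw [Bsimple_of_succ_lt hj, projC_sub, projC_e_of_mem_Ioc hj (right_mem_Ioc.2 hij),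
    projC_e_of_lt hij (Fin.lt_def.2 (by simp)), sub_zero]

lemma projC_e_mem_intL1Ball (hij : i < j) (hj : (j : ℕ) + 1 < n) (k : Fin n) :
    projC (simpleRootsExcept n i j) (e k) ∈
      intL1Ball (blockMean (Iic i)) (blockMean (Ioc i j)) 1 := by
  rcases le_or_gt k i with hki | hik
  · exact projC_e_of_le hij hki ▸ left_mem_intL1Ball
  rcases le_or_gt k j with hkj | hjk
  · exact projC_e_of_mem_Ioc hj (mem_Ioc.2 ⟨hik, hkj⟩) ▸ right_mem_intL1Ball
  · exact projC_e_of_lt hij hjk ▸ zero_mem_intL1Ball zero_le_one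

lemma projC_image_Broots_subset (hij : i < j) (hj : (j : ℕ) + 1 < n) :
    projC (simpleRootsExcept n i j) '' Broots n ⊆
      intL1Ball (blockMean (Iic i)) (blockMean (Ioc i j)) 2 := by
  rintro _ ⟨β, hβ, rfl⟩
  have h := projC_e_mem_intL1Ball hij hj
  have h' k := neg_mem_intL1Ball (h k)
  have h₂ {x y : EuclideanSpace ℝ (Fin n)}
      (hx : x ∈ intL1Ball (blockMean (Iic i)) (blockMean (Ioc i j)) 1)
      (hy : y ∈ intL1Ball _ _ 1) : x + y ∈ intL1Ball _ _ 2 :=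
    add_mem_intL1Ball hx hy
  rcases hβ with ⟨k, l, -, rfl | rfl | rfl | rfl⟩ | ⟨k, rfl | rfl⟩
  · simpa [sub_eq_add_neg] using h₂ (h k) (h' l)
  · simpa using h₂ (h k) (h l)
  · simpa using h₂ (h' k) (h l)
  · simpa [sub_eq_add_neg] using h₂ (h' k) (h' l)
  · exact intL1Ball_mono one_le_two (h k)
  · simpa using intL1Ball_mono one_le_two (h' k)

lemma B2_subset_projC_image_Broots (hij : i < j) (hj : (j : ℕ) + 1 < n) :
    {blockMean (Iic i) - blockMean (Ioc i j), -(blockMean (Iic i) - blockMean (Ioc i j)),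
      blockMean (Ioc i j), -blockMean (Ioc i j), blockMean (Iic i), -blockMean (Iic i),
      blockMean (Iic i) + blockMean (Ioc i j), -(blockMean (Iic i) + blockMean (Ioc i j))} ⊆
      projC (simpleRootsExcept n i j) '' Broots n := by
  have hneg {x} (hx : x ∈ projC (simpleRootsExcept n i j) '' Broots n) :
      -x ∈ projC (simpleRootsExcept n i j) '' Broots n := by
    obtain ⟨β, hβ, rfl⟩ := hx
    exact ⟨-β, neg_mem_Broots hβ, projC_neg _ _⟩
  have hi : (i : ℕ) + 1 < n := by omega
  have hii' : i < ⟨i + 1, hi⟩ := Fin.lt_def.2 (by simp)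
  have hu := projC_e_of_le hij (le_refl i)
  have hw : projC _ (e ⟨i + 1, hi⟩) = blockMean (Ioc i j) :=
    projC_e_of_mem_Ioc hj (mem_Ioc.2 ⟨hii', Fin.le_def.2 (show (i : ℕ) + 1 ≤ j by omega)⟩)
  have h₁ : blockMean (Iic i) - blockMean (Ioc i j) ∈ projC _ '' Broots n :=
    ⟨_, Or.inl ⟨i, _, hii', Or.inl rfl⟩, by rw [projC_sub, hu, hw]⟩
  have h₂ : blockMean (Ioc i j) ∈ projC _ '' Broots n :=
    ⟨e j, Or.inr ⟨j, Or.inl rfl⟩, projC_e_of_mem_Ioc hj (right_mem_Ioc.2 hij)⟩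
  have h₃ : blockMean (Iic i) ∈ projC _ '' Broots n := ⟨e i, Or.inr ⟨i, Or.inl rfl⟩, hu⟩
  have h₄ : blockMean (Iic i) + blockMean (Ioc i j) ∈ projC _ '' Broots n :=
    ⟨_, Or.inl ⟨i, _, hii', Or.inr (Or.inl rfl)⟩, by rw [projC_add, hu, hw]⟩
  simp only [Set.insert_subset_iff, Set.singleton_subset_iff]
  exact ⟨h₁, hneg h₁, h₂, hneg h₂, h₃, hneg h₃, h₄, hneg h₄⟩

end Levi

theorem statement6_general (n : ℕ) (i j : Fin n) (hij : i < j)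
    (hj : (j : ℕ) + 1 < n)
    (S : Set (EuclideanSpace ℝ (Fin n)))
    (hS : S = {v | ∃ k : Fin n, k ≠ i ∧ k ≠ j ∧ v = Bsimple n k}) :
    LinearIndependent ℝ ![projC S (Bsimple n i), projC S (Bsimple n j)] ∧
    reducedRestrictedRoots (Broots n) S =
      {projC S (Bsimple n i), -projC S (Bsimple n i),
       projC S (Bsimple n j), -projC S (Bsimple n j),
       projC S (Bsimple n i) + projC S (Bsimple n j),
       -(projC S (Bsimple n i) + projC S (Bsimple n j)),
       projC S (Bsimple n i) + (2 : ℝ) • projC S (Bsimple n j),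
       -(projC S (Bsimple n i) + (2 : ℝ) • projC S (Bsimple n j))} := by
  obtain rfl : S = simpleRootsExcept n i j := hS
  have huw : LinearIndependent ℝ ![blockMean (Iic i), blockMean (Ioc i j)] :=
    linearIndependent_blockMean_pair (Iic_disjoint_Ioc le_rfl) ⟨i, mem_Iic.2 le_rfl⟩
      ⟨j, right_mem_Ioc.2 hij⟩
  rw [projC_Bsimple_left hij hj, projC_Bsimple_right hij hj, sub_add_cancel,
    show ∀ u w : EuclideanSpace ℝ (Fin n), u - w + (2 : ℝ) • w = u + w from fun u w => by module]
  refine ⟨?_, reduced_eq_of_subset_intL1Ball huw (projC_image_Broots_subset hij hj)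
    (B2_subset_projC_image_Broots hij hj)⟩
  simpa [sub_eq_add_neg] using (LinearIndependent.pair_add_smul_left_iff (b := (-1 : ℝ))).2 huw

/-- In type `B_n` (`n ≥ 3`), removing the simple roots `α_i, α_j`
(`1 ≤ i < j ≤ n−1`), the projections `ᾱ_i, ᾱ_j` onto the orthogonal complement of the
span of the remaining simple roots are linearly independent, and the set of reduced
restricted roots is `{±ᾱ_i, ±ᾱ_j, ±(ᾱ_i + ᾱ_j), ±(ᾱ_i + 2ᾱ_j)}` (type `B_2`). -/
theorem statement6 (n : ℕ) (hn : 3 ≤ n) (i j : Fin n) (hij : i < j)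
    (hj : (j : ℕ) + 1 < n)
    (S : Set (EuclideanSpace ℝ (Fin n)))
    (hS : S = {v | ∃ k : Fin n, k ≠ i ∧ k ≠ j ∧ v = Bsimple n k}) :
    LinearIndependent ℝ ![projC S (Bsimple n i), projC S (Bsimple n j)] ∧
    reducedRestrictedRoots (Broots n) S =
      {projC S (Bsimple n i), -projC S (Bsimple n i),
       projC S (Bsimple n j), -projC S (Bsimple n j),
       projC S (Bsimple n i) + projC S (Bsimple n j),
       -(projC S (Bsimple n i) + projC S (Bsimple n j)),
       projC S (Bsimple n i) + (2 : ℝ) • projC S (Bsimple n j),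
       -(projC S (Bsimple n i) + (2 : ℝ) • projC S (Bsimple n j))} :=
  statement6_general n i j hij hj S hS

end
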